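/- Let T > 0 and N ≥ 1 an integer. Let f, g : ℝ → ℂ be continuous NT-periodic functions whose Fourier coefficient sequences (f̂(2πk/(NT)))_{k∈ℤ} and (ĝ(2πk/(NT)))_{k∈ℤ} are absolutely summable, where ĥ(ζ) = ∫_0^{NT} e^{−iζy} h(y) dy. Then ∫_0^{NT} conj(f(x)) g(x) dx = (1/(NT²)) · ∑_{ξ ∈ Ω_N} ∫_0^T conj(B_T(f)(ξ,x)) · B_T(g)(ξ,x) dx. -/

import Mathlib

open Real Finset

/-- The index set `J_N = {j ∈ ℤ : -N/2 ≤ j < N/2}` of Bloch frequencies. -/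
noncomputable def JN (N : ℕ) : Finset ℤ := Finset.Ico ⌈-(N : ℝ) / 2⌉ ⌈(N : ℝ) / 2⌉

/-- Fourier transform on the torus of period `P`: `ĥ(ζ) = ∫_0^P e^{-iζy} h(y) dy`. -/
noncomputable def fhat (P : ℝ) (h : ℝ → ℂ) (ζ : ℝ) : ℂ :=
  ∫ y in (0:ℝ)..P, Complex.exp (-(Complex.I * (ζ : ℂ) * (y : ℂ))) * h y

/-- The `T`-periodic Bloch transform of a `P`-periodic function `g`:
`B_T(g)(ξ,x) = ∑_{ℓ ∈ ℤ} e^{2πiℓx/T} ĝ(ξ + 2πℓ/T)`. -/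
noncomputable def blochT (T P : ℝ) (g : ℝ → ℂ) (ξ x : ℝ) : ℂ :=
  ∑' ℓ : ℤ, Complex.exp (2 * (Real.pi : ℂ) * Complex.I * (ℓ : ℂ) * (x : ℂ) / (T : ℂ)) *
    fhat P g (ξ + 2 * Real.pi * (ℓ : ℝ) / T)
/-! Expanding `f` and `g` in their absolutely convergent Fourier series on `ℝ / NTℤ` and
integrating termwise against the orthogonality of the characters gives
`∫_0^{NT} conj(f) g = (1/NT) ∑_k conj(f̂_k) ĝ_k`. At `ξ = 2πj/(NT)` the Bloch transform is
the `T`-periodic Fourier series with coefficients `f̂_{j+Nℓ}`, so the same argument on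
`[0, T]` gives `T ∑_ℓ conj(f̂_{j+Nℓ}) ĝ_{j+Nℓ}`; as `j` runs over `N` consecutive integers,
`j + Nℓ` runs over `ℤ` exactly once. -/

open ComplexConjugate

theorem hasSum_conj_mul_of_summable_norm {ι κ : Type*} {a : ι → ℂ} {b : κ → ℂ}
    (ha : Summable fun i => ‖a i‖) (hb : Summable fun k => ‖b k‖) :
    HasSum (fun p : ι × κ => conj (a p.1) * b p.2) (conj (∑' i, a i) * ∑' k, b k) := by
  have ha' : Summable fun i => ‖conj (a i)‖ := by simpa only [Complex.norm_conj] using ha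
  rw [Complex.conj_tsum, tsum_mul_tsum_of_summable_norm ha' hb]
  exact (summable_mul_of_summable_norm ha' hb).hasSum

theorem summable_conj_mul {ι : Type*} {c d : ι → ℂ} (hc : Summable fun k => ‖c k‖)
    (hd : Summable fun k => ‖d k‖) : Summable fun k => conj (c k) * d k := by
  have hdiag : Function.Injective fun k : ι => (k, k) := fun k l h => congrArg Prod.fst h
  simpa only [Function.comp_def] using
    (hasSum_conj_mul_of_summable_norm hc hd).summable.comp_injective hdiag

section Characters

variable {T : ℝ}

theorem norm_fourier_coe (n : ℤ) (x : ℝ) : ‖fourier n (x : AddCircle T)‖ = 1 :=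
  Circle.norm_coe _

theorem continuous_fourier_coe (n : ℤ) : Continuous fun x : ℝ => fourier n (x : AddCircle T) :=
  (fourier n).continuous.comp continuous_quotient_mk'

theorem conj_fourier_mul_fourier (m n : ℤ) (x : AddCircle T) :
    conj (fourier m x) * fourier n x = fourier (n - m) x := by
  rw [← fourier_neg, ← fourier_add, neg_add_eq_sub]

theorem integral_fourier_coe [Fact (0 < T)] (n : ℤ) :
    ∫ x in (0:ℝ)..T, fourier n (x : AddCircle T) = if n = 0 then (T : ℂ) else 0 := by
  have h := fourierCoeff_eq_intervalIntegral (T := T) (fourier n) 0 0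
  rw [fourierCoeff_fourier, zero_add] at h
  simp only [neg_zero, fourier_zero, smul_eq_mul, one_mul] at h
  rw [eq_comm, one_div, inv_smul_eq_iff₀ (Fact.out : 0 < T).ne'] at h
  rw [h, Pi.single_apply]
  rcases eq_or_ne n 0 with rfl | hn
  · simp
  · simp [hn, hn.symm]

theorem integral_conj_fourier_mul_fourier [Fact (0 < T)] (k m : ℤ) :
    ∫ x in (0:ℝ)..T, conj (fourier k (x : AddCircle T)) * fourier m (x : AddCircle T) =
      if k = m then (T : ℂ) else 0 := by
  simp only [conj_fourier_mul_fourier, integral_fourier_coe, sub_eq_zero, eq_comm]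

theorem integral_conj_tsum_mul_tsum_fourier [Fact (0 < T)] {c d : ℤ → ℂ}
    (hc : Summable fun k => ‖c k‖) (hd : Summable fun k => ‖d k‖) :
    ∫ x in (0:ℝ)..T, conj (∑' k, fourier k (x : AddCircle T) * c k) *
        ∑' k, fourier k (x : AddCircle T) * d k =
      T * ∑' k, conj (c k) * d k := by
  set F : ℤ × ℤ → ℝ → ℂ := fun p x =>
    conj (fourier p.1 (x : AddCircle T) * c p.1) * (fourier p.2 (x : AddCircle T) * d p.2)
  have norm_F (p : ℤ × ℤ) (x : ℝ) : ‖F p x‖ = ‖c p.1‖ * ‖d p.2‖ := by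
    simp only [F, norm_mul, Complex.norm_conj, norm_fourier_coe, one_mul]
  have integral_F (p : ℤ × ℤ) :
      ∫ x in (0:ℝ)..T, F p x = conj (c p.1) * d p.2 * if p.1 = p.2 then (T : ℂ) else 0 := by
    rw [← integral_conj_fourier_mul_fourier, ← intervalIntegral.integral_const_mul]
    congr 1 with x
    simp only [F, map_mul]
    ring
  have termwise : HasSum (fun p => ∫ x in (0:ℝ)..T, F p x)
      (∫ x in (0:ℝ)..T, conj (∑' k, fourier k (x : AddCircle T) * c k) *
        ∑' k, fourier k (x : AddCircle T) * d k) :=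
    intervalIntegral.hasSum_integral_of_dominated_convergence (fun p _ => ‖c p.1‖ * ‖d p.2‖)
      (fun p => (((continuous_fourier_coe p.1).mul continuous_const).star.mul
        ((continuous_fourier_coe p.2).mul continuous_const)).aestronglyMeasurable)
      (fun p => .of_forall fun x _ => (norm_F p x).le)
      (.of_forall fun _ _ =>
        hc.mul_of_nonneg hd (fun _ => norm_nonneg _) fun _ => norm_nonneg _)
      intervalIntegrable_const
      (.of_forall fun x _ => hasSum_conj_mul_of_summable_norm
        (a := fun k => fourier k (x : AddCircle T) * c k)
        (b := fun k => fourier k (x : AddCircle T) * d k)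
        (by simpa only [norm_mul, norm_fourier_coe, one_mul] using hc)
        (by simpa only [norm_mul, norm_fourier_coe, one_mul] using hd))
  have off_diagonal : ∀ p ∉ Set.range fun k : ℤ => (k, k), ∫ x in (0:ℝ)..T, F p x = 0 := by
    rintro ⟨k, m⟩ hkm
    have : k ≠ m := fun h => hkm ⟨k, by rw [h]⟩
    simp [integral_F, this]
  have diagonal_injective : Function.Injective fun k : ℤ => (k, k) :=
    fun k l h => congrArg Prod.fst h
  rw [← ((diagonal_injective.hasSum_iff off_diagonal).mpr termwise).tsum_eq, ← tsum_mul_left]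
  congr 1 with k
  simp only [Function.comp_apply, integral_F, if_true]
  ring

end Characters

section FourierSeries

variable {P : ℝ} [Fact (0 < P)] {h : ℝ → ℂ}

theorem fhat_eq_mul_fourierCoeff (hp : Function.Periodic h P) (k : ℤ) :
    fhat P h (2 * π * k / P) = P * fourierCoeff hp.lift k := by
  rw [fourierCoeff_eq_intervalIntegral _ k 0, zero_add, Complex.real_smul, ← mul_assoc,
    ← Complex.ofReal_mul, mul_one_div_cancel (Fact.out : 0 < P).ne', Complex.ofReal_one, one_mul,
    fhat]
  refine intervalIntegral.integral_congr fun y _ => ?_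
  rw [smul_eq_mul, fourier_coe_apply, Function.Periodic.lift_coe]
  congr 2
  push_cast
  ring

theorem tsum_fourier_mul_fhat (hc : Continuous h) (hp : Function.Periodic h P)
    (hs : Summable fun k : ℤ => ‖fhat P h (2 * π * k / P)‖) (x : ℝ) :
    ∑' k : ℤ, fourier k (x : AddCircle P) * (fhat P h (2 * π * k / P) / P) = h x := by
  let H : C(AddCircle P, ℂ) := ⟨hp.lift, hc.quotient_liftOn' _⟩
  have coeff (k : ℤ) : fhat P h (2 * π * k / P) / P = fourierCoeff H k := by
    rw [fhat_eq_mul_fourierCoeff hp,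
      mul_div_cancel_left₀ _ (Complex.ofReal_ne_zero.mpr (Fact.out : 0 < P).ne')]
    rfl
  have hH : Summable (fourierCoeff H) := by
    refine .of_norm ?_
    simpa only [← coeff, norm_div, Complex.norm_real] using hs.div_const ‖P‖
  simp_rw [coeff, mul_comm (fourier _ _)]
  exact (has_pointwise_sum_fourier_series_of_summable hH x).tsum_eq

end FourierSeries

theorem blochT_eq_tsum_fourier {T : ℝ} {N : ℕ} (hN : N ≠ 0) (h : ℝ → ℂ) (j : ℤ) (x : ℝ) :
    blochT T (N * T) h (2 * π * j / (N * T)) x =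
      ∑' ℓ : ℤ, fourier ℓ (x : AddCircle T) *
        fhat (N * T) h (2 * π * ↑(j + N * ℓ) / (N * T)) := by
  refine tsum_congr fun ℓ => ?_
  rw [fourier_coe_apply]
  congr 2
  push_cast
  field_simp

theorem JN_eq_Ico (N : ℕ) : JN N = Ico ⌈-(N : ℝ) / 2⌉ (⌈-(N : ℝ) / 2⌉ + N) := by
  rw [JN, ← Int.ceil_add_intCast, Int.cast_natCast, neg_div, neg_add_eq_sub, sub_half]

theorem sum_Ico_tsum_add_mul {E : Type*} [NormedAddCommGroup E] [CompleteSpace E] {A : ℤ → E}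
    (hA : Summable A) (N : ℕ) [NeZero N] (a : ℤ) :
    ∑ j ∈ Ico a (a + N), ∑' ℓ : ℤ, A (j + N * ℓ) = ∑' k, A k := by
  let e : Fin N × ℤ ≃ ℤ :=
    (Equiv.prodComm _ _).trans ((Int.divModEquiv N).symm.trans (Equiv.addLeft a))
  have he (p : Fin N × ℤ) : e p = a + p.1 + N * p.2 := by
    simp only [e, Equiv.trans_apply, Equiv.prodComm_apply, Int.divModEquiv_symm_apply,
      Prod.fst_swap, Prod.snd_swap, Equiv.coe_addLeft]
    ring
  have hB : Summable fun p : Fin N × ℤ => A (a + p.1 + N * p.2) := by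
    simpa only [Function.comp_def, he] using e.summable_iff.mpr hA
  have ico_eq : univ.image (fun r : Fin N => a + ((r : ℕ) : ℤ)) = Ico a (a + N) := by
    ext k
    simp only [mem_image, mem_univ, true_and, mem_Ico]
    constructor
    · rintro ⟨r, rfl⟩
      omega
    · intro hk
      exact ⟨⟨(k - a).toNat, by omega⟩, by rw [Int.ofNat_toNat]; omega⟩
  calc ∑ j ∈ Ico a (a + N), ∑' ℓ : ℤ, A (j + N * ℓ)
      = ∑ r : Fin N, ∑' ℓ : ℤ, A (a + r + N * ℓ) := by
        rw [← ico_eq, sum_image fun r _ s _ h => by simpa [Fin.ext_iff] using h]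
    _ = ∑' p : Fin N × ℤ, A (a + p.1 + N * p.2) := by
        rw [hB.tsum_prod' hB.prod_factor, tsum_fintype]
    _ = ∑' k, A k := by
        simpa only [he] using e.tsum_eq A

/-- The subharmonic Parseval identity (e:parseval_per) of Section 2.2:
`∫_0^{NT} conj(f) g = (1/(NT²)) ∑_{ξ ∈ Ω_N} ∫_0^T conj(B_T f(ξ,·)) B_T g(ξ,·)`. -/
theorem subharmonic_parseval (T : ℝ) (hT : 0 < T) (N : ℕ) (hN : 1 ≤ N) (f g : ℝ → ℂ)
    (hfc : Continuous f) (hgc : Continuous g)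
    (hfp : Function.Periodic f (N * T)) (hgp : Function.Periodic g (N * T))
    (hfs : Summable fun k : ℤ => ‖fhat (N * T) f (2 * π * (k : ℝ) / (N * T))‖)
    (hgs : Summable fun k : ℤ => ‖fhat (N * T) g (2 * π * (k : ℝ) / (N * T))‖) :
    (∫ x in (0:ℝ)..(N * T), starRingEnd ℂ (f x) * g x) =
      (1 / ((N : ℂ) * (T : ℂ) ^ 2)) *
        ∑ j ∈ JN N,
          ∫ x in (0:ℝ)..T,
            starRingEnd ℂ (blochT T (N * T) f (2 * π * (j : ℝ) / (N * T)) x) *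
              blochT T (N * T) g (2 * π * (j : ℝ) / (N * T)) x := by
  have : NeZero N := ⟨by omega⟩
  have : Fact (0 < T) := ⟨hT⟩
  have : Fact (0 < (N : ℝ) * T) := ⟨by positivity⟩
  set cf : ℤ → ℂ := fun k => fhat (N * T) f (2 * π * k / (N * T))
  set cg : ℤ → ℂ := fun k => fhat (N * T) g (2 * π * k / (N * T))
  have torus : ∫ x in (0:ℝ)..(N * T), conj (f x) * g x =
      (N * T : ℝ) * ∑' k, conj (cf k / (N * T : ℝ)) * (cg k / (N * T : ℝ)) := by
    rw [← integral_conj_tsum_mul_tsum_fourier (by simpa only [norm_div] using hfs.div_const _)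
      (by simpa only [norm_div] using hgs.div_const _)]
    simp only [cf, cg, tsum_fourier_mul_fhat hfc hfp hfs, tsum_fourier_mul_fhat hgc hgp hgs]
  have bloch (j : ℤ) : ∫ x in (0:ℝ)..T,
      conj (blochT T (N * T) f (2 * π * j / (N * T)) x) *
        blochT T (N * T) g (2 * π * j / (N * T)) x =
      T * ∑' ℓ : ℤ, conj (cf (j + N * ℓ)) * cg (j + N * ℓ) := by
    have hinj : Function.Injective fun ℓ : ℤ => j + N * ℓ :=
      (add_right_injective j).comp (mul_right_injective₀ (NeZero.ne _))
    simp only [blochT_eq_tsum_fourier (NeZero.ne N)]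
    exact integral_conj_tsum_mul_tsum_fourier (hfs.comp_injective hinj) (hgs.comp_injective hinj)
  rw [torus, sum_congr rfl fun j _ => bloch j, ← mul_sum, JN_eq_Ico,
    sum_Ico_tsum_add_mul (summable_conj_mul hfs hgs)]
  simp only [map_div₀, Complex.conj_ofReal, div_mul_div_comm, tsum_div_const]
  push_cast
  field_simp
  rfl
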